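/- arXiv:0902.3076 — 5 statements merged into one kernel-verified Lean document; each statement's English description precedes it below -/
import Mathlib

section
/- Let β ≥ 1, let s divide β+1 with s ≥ 1, and R_c ∈ (0,1]. Define δ_max,2(β, R_c, s) = min(s + ⌊(1-R_c)(β+1)⌋, β+1) and δ_max,3(β, R_c, s) = min((β+1)(s-1)/s + 1 + ⌊(1-R_c)(β+1)/s⌋, β+1). Then δ_max,2(β, R_c, s) ≤ δ_max,3(β, R_c, s). -/
/-- The single-precoder diversity bound never exceeds the multiple-precoder one:
`δ_max,2(β,R_c,s) ≤ δ_max,3(β,R_c,s)` whenever `s ∣ β+1`. -/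
theorem delta_max2_le_delta_max3
    (β s : ℕ) (hβ : 1 ≤ β) (hs1 : 1 ≤ s) (hdvd : s ∣ (β + 1))
    (R : ℝ) (h0 : 0 < R) (h1 : R ≤ 1) :
    min ((s : ℤ) + ⌊(1 - R) * ((β : ℝ) + 1)⌋) ((β : ℤ) + 1) ≤
      min ((((β : ℤ) + 1) * ((s : ℤ) - 1)) / (s : ℤ) + 1 +
        ⌊(1 - R) * ((β : ℝ) + 1) / (s : ℝ)⌋) ((β : ℤ) + 1) := by
  obtain ⟨m, hm⟩ := hdvd
  have hs0 : (0:ℝ) < s := by exact_mod_cast hs1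
  have hm1 : 1 ≤ m := by nlinarith [hm, hβ, hs1]
  set x : ℝ := (1 - R) * ((β : ℝ) + 1) with hx
  set k : ℤ := ⌊x⌋ with hk
  set q : ℤ := ⌊x / (s:ℝ)⌋ with hq
  have hx0 : 0 ≤ x := by
    apply mul_nonneg (by linarith) (by positivity)
  have hxlt : x < (β:ℝ) + 1 := by
    have : (1 - R) < 1 := by linarith
    nlinarith [this]
  have hk0 : 0 ≤ k := Int.floor_nonneg.mpr hx0
  have hkx : (k:ℝ) ≤ x := Int.floor_le x
  have hkβ : k ≤ (β:ℤ) := by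
    have : k < (β:ℤ) + 1 := by
      exact_mod_cast Int.floor_lt.mpr (by push_cast; linarith)
    omega
  -- bounds on q
  have hqx : (q:ℝ) ≤ x / s := Int.floor_le _
  have hxq : x / s < (q:ℝ) + 1 := Int.lt_floor_add_one _
  have hkq : k ≤ s * q + s - 1 := by
    have hxlt' : x < ((q:ℝ) + 1) * s := (div_lt_iff₀ hs0).mp hxq
    have h2 : (k:ℝ) < ((q:ℝ) + 1) * s := lt_of_le_of_lt hkx hxlt'
    have h3 : k < (q + 1) * (s:ℤ) := by exact_mod_cast h2
    nlinarith [h3]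
  have hqm : q ≤ (m:ℤ) - 1 := by
    have hxm : x / s < (m:ℝ) := by
      rw [div_lt_iff₀ hs0]
      have : ((β:ℝ) + 1) = (s:ℝ) * m := by exact_mod_cast congrArg (Nat.cast : ℕ → ℝ) hm
      nlinarith [hxlt]
    have : q < (m:ℤ) := by
      exact_mod_cast Int.floor_lt.mpr (by push_cast; exact hxm)
    omega
  -- simplify the integer division
  have hnm : (β:ℤ) + 1 = (s:ℤ) * m := by exact_mod_cast hm
  have hdivsimp : (((β : ℤ) + 1) * ((s : ℤ) - 1)) / (s : ℤ) = (m:ℤ) * ((s:ℤ) - 1) := by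
    rw [hnm, show (s:ℤ) * m * ((s:ℤ) - 1) = (s:ℤ) * ((m:ℤ) * ((s:ℤ) - 1)) by ring]
    exact Int.mul_ediv_cancel_left _ (by positivity)
  rw [hdivsimp]
  clear_value x k q
  rcases le_or_gt ((β:ℤ) + 1) ((s:ℤ) + k) with hc | hc
  · -- min LHS = β+1 ; need q ≥ m - 1
    have hkge : (s:ℤ) * ((m:ℤ) - 1) ≤ k := by
      rw [hnm] at hc; nlinarith
    have hqge : (m:ℤ) - 1 ≤ q := by
      rw [hq]
      apply Int.le_floor.mpr
      rw [le_div_iff₀ hs0]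
      have : ((s:ℤ) * ((m:ℤ) - 1) : ℝ) ≤ (k:ℝ) := by exact_mod_cast hkge
      push_cast at this ⊢
      nlinarith [hkx]
    have h2 : (β:ℤ) + 1 ≤ (m:ℤ) * ((s:ℤ) - 1) + 1 + q := by
      rw [hnm]; nlinarith
    calc min ((s : ℤ) + k) ((β:ℤ) + 1) ≤ (β:ℤ) + 1 := min_le_right _ _
      _ ≤ min ((m:ℤ) * ((s:ℤ) - 1) + 1 + q) ((β:ℤ) + 1) := le_min h2 le_rfl
  · -- min LHS = s + k
    have hkle : k ≤ (s:ℤ) * ((m:ℤ) - 1) := by rw [hnm] at hc; nlinarith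
    have hmain : (s:ℤ) + k ≤ (m:ℤ) * ((s:ℤ) - 1) + 1 + q := by
      clear hx hx0 hxlt hq hqx hxq hk hkx hc h0 h1 hs0 hm hβ hdivsimp hnm hkβ hk0
      clear x R
      rcases eq_or_lt_of_le hqm with hq1 | hq2
      · rw [hq1] at hkq ⊢
        linarith [hkle]
      · have hq2' : q ≤ (m:ℤ) - 2 := by omega
        have hs1' : (1:ℤ) ≤ (s:ℤ) := by exact_mod_cast hs1
        have hint : (0:ℤ) ≤ ((s:ℤ) - 1) * ((m:ℤ) - 2 - q) :=
          mul_nonneg (by linarith) (by linarith)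
        nlinarith [hint, hkq]
    calc min ((s : ℤ) + k) ((β:ℤ) + 1) ≤ (s:ℤ) + k := min_le_left _ _
      _ ≤ min ((m:ℤ) * ((s:ℤ) - 1) + 1 + q) ((β:ℤ) + 1) := le_min hmain (by omega)
end

section
/- Let β ≥ 1, s dividing β+1, and R_c ∈ (0,1]. Then δ_max,2(β, R_c, s) = β+1 if and only if δ_max,3(β, R_c, s) = β+1; in particular both equal β+1 exactly when s ≥ R_c(β+1). -/
/-- The single-precoder and multiple-precoder strategies achieve full diversity
`β+1` under exactly the same condition, namely `s ≥ R_c(β+1)`. -/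
theorem delta_max2_eq_full_iff_delta_max3_eq_full
    (β s : ℕ) (hβ : 1 ≤ β) (hs1 : 1 ≤ s) (hdvd : s ∣ (β + 1))
    (R : ℝ) (h0 : 0 < R) (h1 : R ≤ 1) :
    (min ((s : ℤ) + ⌊(1 - R) * ((β : ℝ) + 1)⌋) ((β : ℤ) + 1) = (β : ℤ) + 1 ↔
      min ((((β : ℤ) + 1) * ((s : ℤ) - 1)) / (s : ℤ) + 1 +
        ⌊(1 - R) * ((β : ℝ) + 1) / (s : ℝ)⌋) ((β : ℤ) + 1) = (β : ℤ) + 1) ∧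
    (min ((s : ℤ) + ⌊(1 - R) * ((β : ℝ) + 1)⌋) ((β : ℤ) + 1) = (β : ℤ) + 1 ↔
      R * ((β : ℝ) + 1) ≤ (s : ℝ)) := by
  obtain ⟨m, hm⟩ := hdvd
  have hmZ : ((β : ℤ) + 1) = (s : ℤ) * (m : ℤ) := by exact_mod_cast hm
  have hmR : ((β : ℝ) + 1) = (s : ℝ) * (m : ℝ) := by exact_mod_cast hm
  have hsR : (0 : ℝ) < (s : ℝ) := by exact_mod_cast hs1
  have hsZ : ((s : ℤ)) ≠ 0 := by positivity
  have hdiv : (((β : ℤ) + 1) * ((s : ℤ) - 1)) / (s : ℤ) = (m : ℤ) * ((s : ℤ) - 1) := by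
    rw [hmZ, mul_assoc, Int.mul_ediv_cancel_left _ hsZ]
  have key2 : min ((s : ℤ) + ⌊(1 - R) * ((β : ℝ) + 1)⌋) ((β : ℤ) + 1) = (β : ℤ) + 1 ↔
      R * ((β : ℝ) + 1) ≤ (s : ℝ) := by
    rw [min_eq_right_iff,
      show (β : ℤ) + 1 ≤ (s : ℤ) + ⌊(1 - R) * ((β : ℝ) + 1)⌋ ↔
        (β : ℤ) + 1 - (s : ℤ) ≤ ⌊(1 - R) * ((β : ℝ) + 1)⌋ from by omega,
      Int.le_floor]
    push_cast
    constructor <;> intro h <;> nlinarith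
  have key3 : min ((((β : ℤ) + 1) * ((s : ℤ) - 1)) / (s : ℤ) + 1 +
        ⌊(1 - R) * ((β : ℝ) + 1) / (s : ℝ)⌋) ((β : ℤ) + 1) = (β : ℤ) + 1 ↔
      R * ((β : ℝ) + 1) ≤ (s : ℝ) := by
    rw [min_eq_right_iff, hdiv,
      show (β : ℤ) + 1 ≤ (m : ℤ) * ((s : ℤ) - 1) + 1 + ⌊(1 - R) * ((β : ℝ) + 1) / (s : ℝ)⌋ ↔
        (m : ℤ) - 1 ≤ ⌊(1 - R) * ((β : ℝ) + 1) / (s : ℝ)⌋ from by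
          constructor <;> intro h <;> nlinarith [hmZ],
      Int.le_floor]
    rw [le_div_iff₀ hsR]
    push_cast
    constructor <;> intro h <;> nlinarith [hmR]
  exact ⟨key2.trans key3.symm, key2⟩
end

section
/- Let β ≥ 2, α ≥ 0, s ≥ 1, R_c ∈ (0,1]. Define δ_max,5 = min(s + ⌊(β+1+α)(1-R_c)⌋, β+1). If R_c ≤ (s+α)/(β+1+α), then δ_max,5 = β+1. -/
/-- Precoded M-slot SSAF bound `δ_max,5 = min(s + ⌊(β+1+α)(1-R_c)⌋, β+1)` achieves
full diversity `β+1` whenever `R_c ≤ (s+α)/(β+1+α)`. -/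
theorem delta_max5_full_diversity
    (β α s : ℕ) (hβ : 2 ≤ β) (hs : 1 ≤ s) (R : ℝ) (h0 : 0 < R) (h1 : R ≤ 1)
    (hrate : R ≤ ((s : ℝ) + α) / ((β : ℝ) + 1 + α)) :
    min ((s : ℤ) + ⌊((β : ℝ) + 1 + α) * (1 - R)⌋) ((β : ℤ) + 1) = (β : ℤ) + 1 := by
  have hM : (0 : ℝ) < (β : ℝ) + 1 + α := by positivity
  have key : ((β : ℝ) + 1 - s) ≤ ((β : ℝ) + 1 + α) * (1 - R) := by
    have := (le_div_iff₀ hM).mp hrate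
    nlinarith
  have hfloor : (β : ℤ) + 1 - s ≤ ⌊((β : ℝ) + 1 + α) * (1 - R)⌋ := by
    rw [Int.le_floor]
    push_cast
    linarith
  omega
end

section
/- Let β ≥ 1 and R_c ∈ (0,1]. For the single-precoder strategy over the (β+1)-slot SSAF channel with spreading s, the Matryoshka parameters are D = (β+1, β, ..., s) with |D| = β + 2 - s blocks and L = (sN/(β+1), N/(β+1), ..., N/(β+1)). Applying the Singleton-type index i from Proposition 1: if R_c ≤ s/(β+1) then i = 1 and the bound equals β+1; if R_c > s/(β+1) and R_c(β+1) ∉ ℤ, then s + i - 1 = ⌈R_c(β+1)⌉ and the bound β + 2 - i equals s + ⌊(1-R_c)(β+1)⌋. -/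
/-!
Writing `c = N/(β+1)` and `x = R_c(β+1)`, the first `n + 1` block lengths add up to
`(s + n) c` and `R_c N = x c`, so the defining inequalities of the index `i = j + 1` say
exactly `s + j - 1 < x ≤ s + j` (the lower bound only when `j ≥ 1`). If `x ≤ s` this forces
`j = 0`; otherwise `⌈x⌉ = s + j`, and `⌊(β+1) - x⌋ = (β+1) - ⌈x⌉` gives the floor form.
-/

open Finset

theorem Int.floor_intCast_sub {R : Type*} [Ring R] [LinearOrder R] [FloorRing R]
    [IsStrictOrderedRing R] (z : ℤ) (a : R) : ⌊(z : R) - a⌋ = z - ⌈a⌉ := by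
  rw [sub_eq_add_neg, Int.floor_intCast_add, Int.floor_neg, ← sub_eq_add_neg]

theorem Finset.sum_range_succ_of_tail_const {M : Type*} [AddCommMonoid M] (L : ℕ → M) (c : M)
    (hL : ∀ k, 1 ≤ k → L k = c) (n : ℕ) : ∑ k ∈ range (n + 1), L k = n • c + L 0 := by
  rw [sum_range_succ', sum_congr rfl fun k _ => hL (k + 1) (Nat.le_add_left 1 k), sum_const,
    card_range]

section BlockLengths

variable {s : ℕ} {c x : ℝ} {L : ℕ → ℝ}

theorem sum_range_succ_blockLengths (hL0 : L 0 = s * c) (hLk : ∀ k, 1 ≤ k → L k = c) (n : ℕ) :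
    ∑ k ∈ range (n + 1), L k = (s + n) * c := by
  rw [sum_range_succ_of_tail_const L c hLk, hL0, nsmul_eq_mul]
  ring

variable (hc : 0 < c) (hL0 : L 0 = s * c) (hLk : ∀ k, 1 ≤ k → L k = c)
include hc hL0 hLk

theorem le_of_mul_le_sum_range_succ_blockLengths {n : ℕ}
    (h : x * c ≤ ∑ k ∈ range (n + 1), L k) : x ≤ s + n := by
  rw [sum_range_succ_blockLengths hL0 hLk] at h
  exact le_of_mul_le_mul_right h hc

theorem lt_of_sum_range_succ_lt_mul_blockLengths {n : ℕ}
    (h : ∑ k ∈ range (n + 1), L k < x * c) : s + n < x := by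
  rw [sum_range_succ_blockLengths hL0 hLk] at h
  exact lt_of_mul_lt_mul_right h hc.le

theorem eq_zero_of_sum_range_lt_mul_blockLengths {n : ℕ} (hx : x ≤ s)
    (h : ∑ k ∈ range n, L k < x * c) : n = 0 := by
  obtain _ | m := n
  · rfl
  · have := lt_of_sum_range_succ_lt_mul_blockLengths hc hL0 hLk h
    have : (0 : ℝ) ≤ m := m.cast_nonneg
    linarith

theorem ceil_eq_of_sum_range_lt_mul_le_sum_blockLengths {n : ℕ} (hx : s < x)
    (hlow : ∑ k ∈ range n, L k < x * c) (hhigh : x * c ≤ ∑ k ∈ range (n + 1), L k) :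
    ⌈x⌉ = s + n := by
  have hx_le := le_of_mul_le_sum_range_succ_blockLengths hc hL0 hLk hhigh
  obtain _ | m := n
  · push_cast at hx_le
    linarith
  · have := lt_of_sum_range_succ_lt_mul_blockLengths hc hL0 hLk hlow
    rw [Int.ceil_eq_iff]
    push_cast at hx_le ⊢
    constructor <;> linarith

end BlockLengths

theorem delta_max2_closed_form_general
    (β s : ℕ)
    (R : ℝ)
    (N : ℝ) (hN : 0 < N)
    (L : ℕ → ℝ) (hL0 : L 0 = (s : ℝ) * N / ((β : ℝ) + 1))
    (hLk : ∀ k, 1 ≤ k → L k = N / ((β : ℝ) + 1))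
    (i : ℕ) (hi1 : 1 ≤ i)
    (hlow : ∑ k ∈ Finset.range (i - 1), L k < R * N)
    (hhigh : R * N ≤ ∑ k ∈ Finset.range i, L k) :
    (R ≤ (s : ℝ) / ((β : ℝ) + 1) → i = 1 ∧ (β : ℤ) + 2 - (i : ℤ) = (β : ℤ) + 1) ∧
    (((s : ℝ) / ((β : ℝ) + 1) < R ∧ (∀ z : ℤ, R * ((β : ℝ) + 1) ≠ (z : ℝ))) →
      (s : ℤ) + (i : ℤ) - 1 = ⌈R * ((β : ℝ) + 1)⌉ ∧
      (β : ℤ) + 2 - (i : ℤ) = (s : ℤ) + ⌊(1 - R) * ((β : ℝ) + 1)⌋) := by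
  obtain ⟨j, rfl⟩ : ∃ j, i = j + 1 := Nat.exists_eq_add_of_le' hi1
  have hb : (0 : ℝ) < β + 1 := by positivity
  have hc : 0 < N / (β + 1) := by positivity
  have hL0' : L 0 = s * (N / (β + 1)) := by rw [hL0, mul_div_assoc]
  have hRN : R * N = R * (β + 1) * (N / (β + 1)) := by field_simp
  rw [hRN, Nat.add_sub_cancel] at hlow
  rw [hRN] at hhigh
  refine ⟨fun hR => ?_, fun ⟨hR, _⟩ => ?_⟩
  · rw [le_div_iff₀ hb] at hR
    obtain rfl := eq_zero_of_sum_range_lt_mul_blockLengths hc hL0' hLk hR hlow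
    exact ⟨rfl, by push_cast; ring⟩
  · rw [div_lt_iff₀ hb] at hR
    have hceil := ceil_eq_of_sum_range_lt_mul_le_sum_blockLengths hc hL0' hLk hR hlow hhigh
    have hfloor : ⌊(1 - R) * ((β : ℝ) + 1)⌋ = (β + 1 : ℤ) - ⌈R * ((β : ℝ) + 1)⌉ := by
      rw [← Int.floor_intCast_sub]
      push_cast
      ring_nf
    rw [hfloor, hceil]
    push_cast
    constructor <;> ring

/-- Single-precoder strategy over the `(β+1)`-slot SSAF channel: with block
lengths `L_1 = sN/(β+1)` and `L_k = N/(β+1)` for `k ≥ 2`, the Proposition-1 index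
`i` satisfies: if `R_c ≤ s/(β+1)` then `i = 1` and the bound is `β+1`; if
`R_c > s/(β+1)` and `R_c(β+1) ∉ ℤ` then `s + i - 1 = ⌈R_c(β+1)⌉` and
`β + 2 - i = s + ⌊(1-R_c)(β+1)⌋`. -/
theorem delta_max2_closed_form
    (β s : ℕ) (hβ : 1 ≤ β) (hs1 : 1 ≤ s) (hs2 : s ≤ β + 1)
    (R : ℝ) (h0 : 0 < R) (h1 : R ≤ 1)
    (N : ℝ) (hN : 0 < N)
    (L : ℕ → ℝ) (hL0 : L 0 = (s : ℝ) * N / ((β : ℝ) + 1))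
    (hLk : ∀ k, 1 ≤ k → L k = N / ((β : ℝ) + 1))
    (i : ℕ) (hi1 : 1 ≤ i) (hi2 : i ≤ β + 2 - s)
    (hlow : ∑ k ∈ Finset.range (i - 1), L k < R * N)
    (hhigh : R * N ≤ ∑ k ∈ Finset.range i, L k) :
    (R ≤ (s : ℝ) / ((β : ℝ) + 1) → i = 1 ∧ (β : ℤ) + 2 - (i : ℤ) = (β : ℤ) + 1) ∧
    (((s : ℝ) / ((β : ℝ) + 1) < R ∧ (∀ z : ℤ, R * ((β : ℝ) + 1) ≠ (z : ℝ))) →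
      (s : ℤ) + (i : ℤ) - 1 = ⌈R * ((β : ℝ) + 1)⌉ ∧
      (β : ℤ) + 2 - (i : ℤ) = (s : ℤ) + ⌊(1 - R) * ((β : ℝ) + 1)⌋) :=
  delta_max2_closed_form_general β s R N hN L hL0 hLk i hi1 hlow hhigh
end

section
/- For integers n ≥ 2 and 1 ≤ s ≤ n with s | n, and any real R ∈ (0,1]: min(n(s-1)/s + 1 + ⌊n(1-R)/s⌋, n) ≥ min(s + ⌊n(1-R)⌋, n). -/
/-- Arithmetic content of `δ_max,2 ≤ δ_max,3` (with `n = β+1`): for `s ∣ n`,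
`min(n(s-1)/s + 1 + ⌊n(1-R)/s⌋, n) ≥ min(s + ⌊n(1-R)⌋, n)`. -/
theorem min_precoder_ineq
    (n s : ℕ) (hn : 2 ≤ n) (hs1 : 1 ≤ s) (hs2 : s ≤ n) (hdvd : s ∣ n)
    (R : ℝ) (h0 : 0 < R) (h1 : R ≤ 1) :
    min ((s : ℤ) + ⌊(n : ℝ) * (1 - R)⌋) (n : ℤ) ≤
      min (((n : ℤ) * ((s : ℤ) - 1)) / (s : ℤ) + 1 + ⌊(n : ℝ) * (1 - R) / (s : ℝ)⌋)
        (n : ℤ) := by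
  obtain ⟨m, hm⟩ := hdvd
  have hs0 : (0:ℤ) < (s:ℤ) := by exact_mod_cast hs1
  have hnpos : (0:ℝ) < (n:ℝ) := by positivity
  have hx0 : (0:ℝ) ≤ (n:ℝ) * (1 - R) := mul_nonneg (le_of_lt hnpos) (by linarith)
  have hxn : (n:ℝ) * (1 - R) < (n:ℝ) := by nlinarith
  set a : ℤ := ⌊(n : ℝ) * (1 - R)⌋ with ha
  have ha0 : 0 ≤ a := Int.floor_nonneg.mpr hx0
  have haN : a < (n:ℤ) := Int.floor_lt.mpr (by exact_mod_cast hxn)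
  have hfd : ⌊(n : ℝ) * (1 - R) / (s : ℝ)⌋ = a / (s:ℤ) := by
    have hsr : (0:ℝ) < (s:ℝ) := by exact_mod_cast hs1
    rw [Int.floor_eq_iff]
    constructor
    · rw [le_div_iff₀ hsr]
      have h1' : ((a / (s:ℤ)) * (s:ℤ) : ℤ) ≤ a := Int.ediv_mul_le a (ne_of_gt hs0)
      calc ((a / (s:ℤ) : ℤ) : ℝ) * (s:ℝ) = (((a / (s:ℤ)) * (s:ℤ) : ℤ) : ℝ) := by push_cast; ring
        _ ≤ (a : ℝ) := by exact_mod_cast h1'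
        _ ≤ (n:ℝ) * (1 - R) := Int.floor_le _
    · rw [div_lt_iff₀ hsr]
      have h2' : a < (a / (s:ℤ) + 1) * (s:ℤ) := Int.lt_ediv_add_one_mul_self a hs0
      calc (n:ℝ) * (1 - R) < (a : ℝ) + 1 := Int.lt_floor_add_one _
        _ ≤ (((a / (s:ℤ) + 1) * (s:ℤ) : ℤ) : ℝ) := by exact_mod_cast h2'
        _ = ((a / (s:ℤ) : ℤ) + 1 : ℝ) * (s:ℝ) := by push_cast; ring
  have hnd : ((n : ℤ) * ((s : ℤ) - 1)) / (s : ℤ) = (n:ℤ) - (m:ℤ) := by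
    have hnm : (n:ℤ) = (s:ℤ) * (m:ℤ) := by exact_mod_cast hm
    have : (n : ℤ) * ((s : ℤ) - 1) = (s:ℤ) * ((n:ℤ) - (m:ℤ)) := by rw [hnm]; ring
    rw [this, Int.mul_ediv_cancel_left _ (ne_of_gt hs0)]
  rw [hfd, hnd]
  set q : ℤ := a / (s:ℤ) with hq
  set r : ℤ := a % (s:ℤ) with hr
  have hqr : (s:ℤ) * q + r = a := Int.mul_ediv_add_emod a (s:ℤ)
  have hr0 : 0 ≤ r := Int.emod_nonneg a (ne_of_gt hs0)
  have hrs : r < (s:ℤ) := Int.emod_lt_of_pos a hs0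
  have hnm : (n:ℤ) = (s:ℤ) * (m:ℤ) := by exact_mod_cast hm
  have hm1 : 1 ≤ (m:ℤ) := by
    rcases Nat.eq_zero_or_pos m with h | h
    · subst h; simp at hm; omega
    · exact_mod_cast h
  refine le_min ?_ (min_le_right _ _)
  rcases le_or_gt ((s:ℤ) + a) (n:ℤ) with hcase | hcase
  · -- min = s + a ≤ n - m + 1 + q
    refine le_trans (min_le_left _ _) ?_
    -- need: s + a ≤ n - m + 1 + q, i.e. (s-1)*(m-1-q) ≥ r
    set t : ℤ := (m:ℤ) - 1 - q with ht
    have hst : r ≤ (s:ℤ) * t := by nlinarith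
    have ht0 : 0 ≤ t := by nlinarith
    have key : r ≤ ((s:ℤ) - 1) * t := by
      rcases eq_or_lt_of_le ht0 with h | h
      · nlinarith
      · nlinarith
    nlinarith
  · -- min ≤ n ≤ n - m + 1 + q
    refine le_trans (min_le_right _ _) ?_
    have hq' : (m:ℤ) - 1 ≤ q := by
      by_contra h
      push_neg at h
      nlinarith
    linarith
end
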